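/- arXiv:1408.3747 — 6 statements merged into one kernel-verified Lean document; each statement's English description precedes it below -/
import Mathlib

section
/- Let n be an even positive integer and φ_1, …, φ_n real numbers with cyclic indices mod n. The system α_i − φ_i = φ_i − α_{i+1} (mod 2π), i = 1,…,n, has a solution if and only if 2·Σ_{i=1}^n (−1)^i φ_i ≡ 0 (mod 2π); moreover, if a solution exists, then the full solution set is obtained from one solution by adding an arbitrary constant c to all α_i with even index and subtracting c from all α_i with odd index. -/
open Real Finset

/-- `a ≡ b` modulo the real number `p`. -/
def RModEq (p a b : ℝ) : Prop := ∃ m : ℤ, a - b = m * p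

/-!
Modulo `2π` the system reads `α i + α (i + 1) = 2 φ i` in the group `ℝ ⧸ 2πℤ`, and everything
happens in an arbitrary additive group. For `n` even, the alternating sum of the left-hand sides
telescopes to zero, which gives necessity. Conversely, solving the recurrence from `α 0 = 0`
closes up after `n` steps exactly when the alternating sum of the right-hand sides vanishes.
Two solutions differ by a solution of `δ i + δ (i + 1) = 0`, which forces `δ i = (-1)ⁱ δ 0`.
-/

section CyclicAlternatingSystem

variable {G : Type*} [AddCommGroup G] {n : ℕ}

lemma neg_one_pow_val_add_one [NeZero n] (hn : Even n) (i : ZMod n) :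
    (-1 : ℤ) ^ (i + 1).val = -(-1) ^ i.val := by
  rw [neg_one_pow_eq_pow_mod_two, ZMod.val_add, ZMod.val_one_eq_one_mod, Nat.add_mod_mod,
    Nat.mod_mod_of_dvd _ hn.two_dvd, ← neg_one_pow_eq_pow_mod_two, pow_succ, mul_neg_one]

lemma sum_range_neg_one_pow_smul_add_succ (hn : Even n) (α : ZMod n → G) :
    ∑ k ∈ range n, (-1 : ℤ) ^ k • (α k + α (k + 1)) = 0 := by
  set f : ℕ → G := fun k ↦ (-1 : ℤ) ^ k • α k
  calc ∑ k ∈ range n, (-1 : ℤ) ^ k • (α k + α (k + 1))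
      = -∑ k ∈ range n, (f (k + 1) - f k) := by
        rw [← sum_neg_distrib]
        refine sum_congr rfl fun k _ ↦ ?_
        simp only [f, Nat.cast_succ, pow_succ, mul_neg_one, neg_smul, smul_add]
        abel
    _ = 0 := by rw [sum_range_sub]; simp [f, hn.neg_one_pow]

lemma add_succ_eq_zero_iff [NeZero n] (hn : Even n) (δ : ZMod n → G) :
    (∀ i, δ i + δ (i + 1) = 0) ↔ ∃ c, ∀ i, δ i = (-1 : ℤ) ^ i.val • c := by
  constructor
  · intro h
    have hδ : ∀ k : ℕ, δ k = (-1 : ℤ) ^ k • δ 0 := by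
      intro k
      induction k with
      | zero => simp
      | succ k ih =>
        rw [Nat.cast_succ, eq_neg_of_add_eq_zero_right (h k), ih, pow_succ, mul_neg_one, neg_smul]
    exact ⟨δ 0, fun i ↦ by rw [← hδ, ZMod.natCast_zmod_val]⟩
  · rintro ⟨c, hc⟩ i
    rw [hc, hc, neg_one_pow_val_add_one hn, neg_smul, add_neg_cancel]

lemma apply_val_add_one [NeZero n] {X : Type*} {f : ℕ → X} (hf : f n = f 0) (i : ZMod n) :
    f (i + 1).val = f (i.val + 1) := by
  rw [ZMod.val_add, ZMod.val_one_eq_one_mod, Nat.add_mod_mod]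
  rcases (Nat.add_one_le_iff.2 i.val_lt).eq_or_lt with h | h
  · rw [h, Nat.mod_self, hf]
  · rw [Nat.mod_eq_of_lt h]

lemma exists_add_succ_eq_iff [NeZero n] (hn : Even n) (b : ZMod n → G) :
    (∃ α : ZMod n → G, ∀ i, α i + α (i + 1) = b i) ↔
      ∑ k ∈ range n, (-1 : ℤ) ^ k • b k = 0 := by
  constructor
  · rintro ⟨α, hα⟩
    simpa only [hα] using sum_range_neg_one_pow_smul_add_succ hn α
  · intro hb
    set f : ℕ → G := fun k ↦ (-1 : ℤ) ^ (k + 1) • ∑ j ∈ range k, (-1 : ℤ) ^ j • b j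
    have hf : ∀ k : ℕ, f k + f (k + 1) = b k := by
      intro k
      have hsq : (-1 : ℤ) ^ k * (-1) ^ k = 1 := by rw [← mul_pow]; simp
      simp only [f, sum_range_succ]
      linear_combination (norm := module) hsq • b k
    have hper : f n = f 0 := by simp [f, hb]
    exact ⟨fun i ↦ f i.val, fun i ↦ by
      dsimp only
      rw [apply_val_add_one hper, hf, ZMod.natCast_zmod_val]⟩

lemma add_succ_eq_iff_exists_eq_add_smul [NeZero n] (hn : Even n) {α b : ZMod n → G}
    (hα : ∀ i, α i + α (i + 1) = b i) (β : ZMod n → G) :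
    (∀ i, β i + β (i + 1) = b i) ↔ ∃ c, ∀ i, β i = α i + (-1 : ℤ) ^ i.val • c := by
  have hdiff : (∀ i, β i + β (i + 1) = b i) ↔ ∀ i, (β - α) i + (β - α) (i + 1) = 0 := by
    refine forall_congr' fun i ↦ ?_
    rw [Pi.sub_apply, Pi.sub_apply, sub_add_sub_comm, sub_eq_zero, hα]
  simp only [hdiff, add_succ_eq_zero_iff hn, Pi.sub_apply, sub_eq_iff_eq_add']

end CyclicAlternatingSystem

lemma rModEq_iff_coe_eq {p a b : ℝ} : RModEq p a b ↔ (a : AddCircle p) = b := by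
  rw [QuotientAddGroup.eq_iff_sub_mem, AddSubgroup.mem_zmultiples_iff]
  simp only [RModEq, zsmul_eq_mul, eq_comm]

lemma rModEq_sub_sub_iff {p a a' f : ℝ} :
    RModEq p (a - f) (f - a') ↔ (a : AddCircle p) + a' = 2 • (f : AddCircle p) := by
  rw [rModEq_iff_coe_eq, AddCircle.coe_sub, AddCircle.coe_sub, sub_eq_sub_iff_add_eq_add,
    two_nsmul]

lemma coe_neg_one_pow_mul {p : ℝ} (k : ℕ) (x : ℝ) :
    (((-1 : ℝ) ^ k * x : ℝ) : AddCircle p) = (-1 : ℤ) ^ k • (x : AddCircle p) := by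
  rw [← AddCircle.coe_zsmul, zsmul_eq_mul]
  push_cast
  rfl

lemma coe_two_mul_sum {p : ℝ} (n : ℕ) (x : ℕ → ℝ) :
    ((2 * ∑ k ∈ range n, (-1 : ℝ) ^ k * x k : ℝ) : AddCircle p) =
      ∑ k ∈ range n, (-1 : ℤ) ^ k • 2 • (x k : AddCircle p) := by
  rw [mul_sum]
  refine (map_sum (QuotientAddGroup.mk' (AddSubgroup.zmultiples p)) _ _).trans
    (sum_congr rfl fun k _ ↦ ?_)
  rw [QuotientAddGroup.mk'_apply, mul_left_comm, coe_neg_one_pow_mul, two_mul, AddCircle.coe_add,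
    two_nsmul]

theorem stmt1 (n : ℕ) (hpos : 0 < n) (hn : Even n) (φ : ZMod n → ℝ) :
    ((∃ α : ZMod n → ℝ,
        ∀ i : ZMod n, RModEq (2 * π) (α i - φ i) (φ i - α (i + 1))) ↔
      RModEq (2 * π) (2 * ∑ i ∈ Finset.range n, (-1 : ℝ) ^ i * φ (i : ZMod n)) 0) ∧
    (∀ α : ZMod n → ℝ,
      (∀ i : ZMod n, RModEq (2 * π) (α i - φ i) (φ i - α (i + 1))) →
      ∀ β : ZMod n → ℝ,
        ((∀ i : ZMod n, RModEq (2 * π) (β i - φ i) (φ i - β (i + 1))) ↔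
          ∃ c : ℝ, ∀ i : ZMod n,
            RModEq (2 * π) (β i) (α i + (-1 : ℝ) ^ i.val * c))) := by
  have : NeZero n := ⟨hpos.ne'⟩
  have hsys (α : ZMod n → ℝ) : (∀ i, RModEq (2 * π) (α i - φ i) (φ i - α (i + 1))) ↔
      ∀ i, (α i : AddCircle (2 * π)) + α (i + 1) = 2 • (φ i : AddCircle (2 * π)) :=
    forall_congr' fun _ ↦ rModEq_sub_sub_iff
  have hsurj : Function.Surjective ((↑) : ℝ → AddCircle (2 * π)) := QuotientAddGroup.mk_surjective
  refine ⟨?_, fun α hα β ↦ ?_⟩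
  · rw [rModEq_iff_coe_eq, coe_two_mul_sum, AddCircle.coe_zero,
      ← exists_add_succ_eq_iff hn fun i ↦ 2 • (φ i : AddCircle (2 * π)),
      (hsurj.comp_left (α := ZMod n)).exists]
    exact exists_congr hsys
  · rw [hsys] at hα
    rw [hsys, add_succ_eq_iff_exists_eq_add_smul hn hα, hsurj.exists]
    simp only [rModEq_iff_coe_eq, AddCircle.coe_add, coe_neg_one_pow_mul]
end

section
/- Let n be an even positive integer and let θ_i = φ_i − φ_{i−1} (indices mod n) be the exterior angles of an n-gon with side directions φ_i. If the framing system α_i − φ_i = φ_i − α_{i+1} (mod 2π) has a solution, then Σ_{i odd} θ_i ≡ 0 (mod π) and Σ_{i even} θ_i ≡ 0 (mod π). -/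
open Real Finset

private lemma my_sum_shift {n : ℕ} [NeZero n] (f : ZMod n → ℝ)
    (p q : ZMod n → Prop) [DecidablePred p] [DecidablePred q]
    (h : ∀ i, p i ↔ q (i + 1)) :
    ∑ i ∈ Finset.univ.filter p, f (i + 1) = ∑ j ∈ Finset.univ.filter q, f j := by
  refine Finset.sum_bij' (fun i _ => i + 1) (fun j _ => j - 1) ?_ ?_ ?_ ?_ ?_
  · intro i hi
    simp only [Finset.mem_filter, Finset.mem_univ, true_and] at hi ⊢
    exact (h i).mp hi
  · intro j hj
    simp only [Finset.mem_filter, Finset.mem_univ, true_and] at hj ⊢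
    exact (h (j - 1)).mpr (by rwa [sub_add_cancel])
  · intro i _; ring
  · intro j _; ring
  · intro i _; rfl

private lemma my_flip {n : ℕ} [NeZero n] (hn : Even n) (i : ZMod n) :
    ((i + 1 : ZMod n).val) % 2 = (i.val + 1) % 2 := by
  have hn0 : n ≠ 0 := NeZero.ne n
  have hn2 : 2 ≤ n := by
    rcases hn with ⟨k, hk⟩; omega
  haveI : Fact (1 < n) := ⟨by omega⟩
  have h2 : (2 : ℕ) ∣ n := hn.two_dvd
  rw [ZMod.val_add, ZMod.val_one, Nat.mod_mod_of_dvd _ h2]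

private lemma my_key {n : ℕ} [NeZero n] (φ α : ZMod n → ℝ) (m : ZMod n → ℤ)
    (hm : ∀ i, (α i - φ i) - (φ i - α (i + 1)) = (m i : ℝ) * (2 * π))
    (p q : ZMod n → Prop) [DecidablePred p] [DecidablePred q]
    (hpq : ∀ i, p i ↔ q (i + 1)) (hqp : ∀ i, q i ↔ p (i + 1)) :
    RModEq π (∑ i ∈ Finset.univ.filter p, (φ i - φ (i - 1))) 0 := by
  refine ⟨-(∑ i ∈ Finset.univ.filter p, (m i - m (i - 1))), ?_⟩
  have hφ : ∀ i, φ i = (α i + α (i + 1)) / 2 - π * m i := fun i => by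
    linear_combination (-1/2) * hm i
  have expand : ∀ i : ZMod n,
      φ i - φ (i - 1) = (α (i + 1)) / 2 - (α (i - 1)) / 2
        - π * ((m i : ℝ) - (m (i - 1) : ℝ)) := by
    intro i
    have h := hφ i
    have h' := hφ (i - 1)
    rw [sub_add_cancel] at h'
    linarith
  have h1 : ∑ i ∈ Finset.univ.filter p, α (i + 1) = ∑ j ∈ Finset.univ.filter q, α j :=
    my_sum_shift α p q hpq
  have h2 : ∑ i ∈ Finset.univ.filter p, α (i - 1) = ∑ j ∈ Finset.univ.filter q, α j := by
    rw [← my_sum_shift (fun k => α (k - 1)) q p hqp]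
    exact Finset.sum_congr rfl (fun j _ => by rw [add_sub_cancel_right])
  rw [Finset.sum_congr rfl (fun i _ => expand i), Finset.sum_sub_distrib,
    Finset.sum_sub_distrib, ← Finset.sum_div, ← Finset.sum_div, h1, h2,
    ← Finset.mul_sum]
  push_cast
  ring

theorem stmt2 (n : ℕ) [NeZero n] (hn : Even n) (φ : ZMod n → ℝ)
    (α : ZMod n → ℝ)
    (hα : ∀ i : ZMod n, RModEq (2 * π) (α i - φ i) (φ i - α (i + 1))) :
    RModEq π (∑ i ∈ Finset.univ.filter (fun i : ZMod n => i.val % 2 = 1),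
        (φ i - φ (i - 1))) 0 ∧
    RModEq π (∑ i ∈ Finset.univ.filter (fun i : ZMod n => i.val % 2 = 0),
        (φ i - φ (i - 1))) 0 := by
  choose m hm using hα
  constructor
  · exact my_key φ α m hm (fun i => i.val % 2 = 1) (fun i => i.val % 2 = 0)
      (fun i => by show _ ↔ _ % 2 = _; rw [my_flip hn i]; omega)
      (fun i => by show _ ↔ _ % 2 = _; rw [my_flip hn i]; omega)
  · exact my_key φ α m hm (fun i => i.val % 2 = 0) (fun i => i.val % 2 = 1)
      (fun i => by show _ ↔ _ % 2 = _; rw [my_flip hn i]; omega)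
      (fun i => by show _ ↔ _ % 2 = _; rw [my_flip hn i]; omega)
end

section
/- Let n ≥ 1, let ω = exp(2πi/n), and let M be the n × n circulant matrix whose first row is cos(π/n)·(0, 1, −1, 1, …, −1) (i.e., entry (1, k+1) equals cos(π/n)·(−1)^{k−1} for k = 1,…,n−1, and the diagonal entry is 0), with each subsequent row the cyclic shift of the previous one. Then for each j with 1 ≤ j ≤ n−1 and n odd, the eigenvalue of M associated to ω^j equals i·cos(π/n)·tan(πj/n). -/
/-!
Every additive character `ψ` of a finite abelian group is an eigenvector of the transpose of
every circulant matrix, the eigenvalue being `Σ_g f g ψ g` for the first row `f`. Here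
`v i = ζ ^ i` with `ζ = exp (2iθ)`, `θ = πj/n`, and for the alternating row the eigenvalue is
`cos (π/n)` times a geometric sum `S` with `(1 + ζ) S = ζ - 1`, as `n - 1` is even. Finally
`ζ - 1 = 2i sin θ e^{iθ}` and `ζ + 1 = 2 cos θ e^{iθ}`, and `cos θ ≠ 0` because `2j/n` is
never an odd integer when `n` is odd.
-/

open Real Finset Matrix

theorem Matrix.transpose_circulant_mulVec_addChar {G R : Type*} [AddCommGroup G] [Fintype G]
    [CommRing R] (f : G → R) (ψ : AddChar G R) :
    (circulant f)ᵀ *ᵥ ψ = (∑ g, f g * ψ g) • ⇑ψ := by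
  ext i
  simp only [mulVec, dotProduct, transpose_apply, circulant_apply, Pi.smul_apply, smul_eq_mul,
    Finset.sum_mul]
  refine Fintype.sum_equiv (Equiv.subRight i) _ _ fun k => ?_
  rw [Equiv.subRight_apply, mul_assoc, ← ψ.map_add_eq_mul, sub_add_cancel]

def Fin.powAddChar {R : Type*} [Monoid R] {n : ℕ} [NeZero n] {ζ : R} (hζ : ζ ^ n = 1) :
    AddChar (Fin n) R where
  toFun i := ζ ^ (i : ℕ)
  map_zero_eq_one' := by simp
  map_add_eq_mul' a b := by rw [Fin.val_add, ← pow_eq_pow_mod _ hζ, pow_add]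

theorem Fin.powAddChar_apply {R : Type*} [Monoid R] {n : ℕ} [NeZero n] {ζ : R} (hζ : ζ ^ n = 1)
    (i : Fin n) : Fin.powAddChar hζ i = ζ ^ (i : ℕ) :=
  rfl

theorem Fin.val_sub_eq_add_sub_mod {n : ℕ} (k i : Fin n) :
    ((k - i : Fin n) : ℕ) = (k + n - i) % n := by
  rw [Fin.val_sub]
  congr 1
  omega

theorem one_add_mul_sum_alternating_mul_pow {R : Type*} [CommRing R] {n : ℕ} (hn : Odd n) {ζ : R}
    (hζ : ζ ^ n = 1) :
    (1 + ζ) * ∑ m : Fin n, (if (m : ℕ) = 0 then 0 else (-1) ^ ((m : ℕ) - 1)) * ζ ^ (m : ℕ)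
      = ζ - 1 := by
  obtain ⟨k, rfl⟩ := hn
  have hshift : ∑ m : Fin (2 * k + 1),
      (if (m : ℕ) = 0 then 0 else (-1) ^ ((m : ℕ) - 1)) * ζ ^ (m : ℕ)
        = ζ * ∑ m ∈ range (2 * k), (-ζ) ^ m := by
    rw [Fin.sum_univ_eq_sum_range (fun m => (if m = 0 then 0 else (-1) ^ (m - 1)) * ζ ^ m),
      sum_range_succ', mul_sum]
    simp only [Nat.add_one_ne_zero, if_false, if_true, add_tsub_cancel_right, zero_mul, add_zero]
    refine sum_congr rfl fun m _ => ?_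
    rw [neg_pow]
    ring
  have hgeom : (1 + ζ) * ∑ m ∈ range (2 * k), (-ζ) ^ m = 1 - ζ ^ (2 * k) := by
    simpa [sub_neg_eq_add, (even_two_mul k).neg_pow] using mul_neg_geom_sum (-ζ) (2 * k)
  rw [hshift, mul_left_comm, hgeom, mul_sub, mul_one, ← pow_succ', hζ]

theorem Complex.exp_two_mul_mul_I_add_one (z : ℂ) :
    exp (2 * z * I) + 1 = 2 * cos z * exp (z * I) := by
  rw [exp_mul_I, exp_mul_I, cos_two_mul, sin_two_mul]
  ring

theorem Complex.exp_two_mul_mul_I_sub_one (z : ℂ) :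
    exp (2 * z * I) - 1 = 2 * I * sin z * exp (z * I) := by
  rw [exp_mul_I, exp_mul_I, cos_two_mul, sin_two_mul]
  linear_combination 2 * sin_sq_add_cos_sq z - 2 * sin z ^ 2 * I_sq

theorem Complex.eq_I_mul_tan_of_one_add_exp_mul {z S : ℂ} (hz : cos z ≠ 0)
    (h : (1 + exp (2 * z * I)) * S = exp (2 * z * I) - 1) : S = I * tan z := by
  rw [add_comm, exp_two_mul_mul_I_add_one, exp_two_mul_mul_I_sub_one] at h
  have hw := exp_ne_zero (z * I)
  rw [tan_eq_sin_div_cos, eq_comm, mul_div_assoc', div_eq_iff hz]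
  apply mul_left_cancel₀ (mul_ne_zero two_ne_zero hw)
  linear_combination -h

theorem Real.cos_pi_mul_div_ne_zero {n : ℕ} (hn : Odd n) (j : ℕ) : cos (π * j / n) ≠ 0 := by
  rw [Ne, cos_eq_zero_iff]
  rintro ⟨k, hk⟩
  have hnR : (n : ℝ) ≠ 0 := Nat.cast_ne_zero.mpr hn.pos.ne'
  have hreal : ((2 * j : ℤ) : ℝ) = ((2 * k + 1) * n : ℤ) := by
    push_cast
    field_simp at hk
    linarith
  have hodd : Odd ((2 * k + 1) * n : ℤ) := (odd_two_mul_add_one k).mul hn.natCast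
  rw [← Int.cast_injective hreal] at hodd
  exact Int.not_even_iff_odd.mpr hodd (even_two_mul _)

theorem stmt7_general (n : ℕ) (hn : Odd n)
    (M : Matrix (Fin n) (Fin n) ℂ)
    (hM : ∀ i k : Fin n, M i k =
      if i = k then 0
      else (Real.cos (π / n) : ℂ) * (-1) ^ (((k.val + n - i.val) % n) - 1))
    (j : ℕ)
    (v : Fin n → ℂ)
    (hv : ∀ i : Fin n, v i = Complex.exp (2 * π * Complex.I * j * i.val / n)) :
    M.mulVec v = (Complex.I * (Real.cos (π / n) : ℂ) * (Real.tan (π * j / n) : ℂ)) • v := by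
  have : NeZero n := ⟨hn.pos.ne'⟩
  have hn0 : (n : ℂ) ≠ 0 := NeZero.ne _
  set θ : ℝ := π * j / n
  set ζ := Complex.exp (2 * θ * Complex.I)
  have hζ : ζ ^ n = 1 := by
    rw [← Complex.exp_nat_mul, ← Complex.exp_nat_mul_two_pi_mul_I j]
    congr 1
    push_cast [θ]
    field_simp
  have hv' : v = Fin.powAddChar hζ := funext fun i => by
    rw [hv, Fin.powAddChar_apply, ← Complex.exp_nat_mul]
    congr 1
    push_cast [θ]
    field_simp
  have hM' : M = (circulant fun m : Fin n =>
      (Real.cos (π / n) : ℂ) * (if (m : ℕ) = 0 then 0 else (-1) ^ ((m : ℕ) - 1)))ᵀ := by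
    ext i k
    rw [hM, transpose_apply, circulant_apply, ← Fin.val_sub_eq_add_sub_mod]
    by_cases hik : i = k
    · simp [hik]
    · simp [hik, Fin.val_eq_zero_iff, sub_eq_zero, Ne.symm hik]
  have hcos : Complex.cos θ ≠ 0 := by exact_mod_cast Real.cos_pi_mul_div_ne_zero hn j
  rw [hM', hv', transpose_circulant_mulVec_addChar]
  congr 1
  simp only [Fin.powAddChar_apply, mul_assoc, ← mul_sum, Complex.ofReal_tan]
  rw [Complex.eq_I_mul_tan_of_one_add_exp_mul hcos (one_add_mul_sum_alternating_mul_pow hn hζ)]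
  ring

theorem stmt7 (n : ℕ) (hn1 : 1 ≤ n) (hn : Odd n)
    (M : Matrix (Fin n) (Fin n) ℂ)
    (hM : ∀ i k : Fin n, M i k =
      if i = k then 0
      else (Real.cos (π / n) : ℂ) * (-1) ^ (((k.val + n - i.val) % n) - 1))
    (j : ℕ) (hj1 : 1 ≤ j) (hj : j ≤ n - 1)
    (v : Fin n → ℂ)
    (hv : ∀ i : Fin n, v i = Complex.exp (2 * π * Complex.I * j * i.val / n)) :
    M.mulVec v = (Complex.I * (Real.cos (π / n) : ℂ) * (Real.tan (π * j / n) : ℂ)) • v :=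
  stmt7_general n hn M hM j v hv
end

section
/- For n = 5, the ratio of the two positive numbers cos(π/5)·tan(2π/5) and cos(π/5)·tan(π/5) satisfies tan(π/5)/tan(2π/5) = √5 − 2; in particular this ratio is irrational, so the two eigenvalue magnitudes cos(π/5)·tan(π/5) and cos(π/5)·tan(2π/5) are rationally independent. -/
open Real

/-! With `c = cos (π/5) = (1 + √5)/4`, the identity `tan x / tan 2x = cos 2x / (2 cos² x)`
gives `(2c² - 1) / (2c²) = (√5 - 1)/(3 + √5) = √5 - 2`, irrational because `√5` is.
The common factor `cos (π/5)` cancels from the eigenvalue ratio. -/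

theorem Real.tan_div_tan_two_mul {x : ℝ} (hsin : sin x ≠ 0) (hcos : cos x ≠ 0) :
    tan x / tan (2 * x) = cos (2 * x) / (2 * cos x ^ 2) := by
  rw [tan_eq_sin_div_cos, tan_eq_sin_div_cos, sin_two_mul]
  field_simp

theorem Real.tan_pi_div_five_div_tan_two_pi_div_five :
    tan (π / 5) / tan (2 * π / 5) = √5 - 2 := by
  have hpi := pi_pos
  have hsin : sin (π / 5) ≠ 0 := (sin_pos_of_pos_of_lt_pi (by linarith) (by linarith)).ne'
  have hcos : cos (π / 5) ≠ 0 := (cos_pos_of_mem_Ioo ⟨by linarith, by linarith⟩).ne'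
  have h5 : √5 ^ 2 = 5 := sq_sqrt (by norm_num)
  rw [mul_div_assoc, tan_div_tan_two_mul hsin hcos, cos_two_mul, cos_pi_div_five, div_eq_iff]
  · linear_combination (-(√5 - 1) / 8) * h5
  · positivity

theorem stmt9 :
    Real.tan (π / 5) / Real.tan (2 * π / 5) = Real.sqrt 5 - 2 ∧
    Irrational ((Real.cos (π / 5) * Real.tan (π / 5)) /
      (Real.cos (π / 5) * Real.tan (2 * π / 5))) := by
  have hcos : cos (π / 5) ≠ 0 := by rw [cos_pi_div_five]; positivity
  rw [mul_div_mul_left _ _ hcos, tan_pi_div_five_div_tan_two_pi_div_five]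
  refine ⟨rfl, ?_⟩
  simpa using Nat.prime_five.irrational_sqrt.sub_intCast 2
end

section
/- In the 5-dimensional coordinate space with coordinates (p, q, r, φ, α), α ∉ (π/2)ℤ, consider the vector fields ν = ∂/∂α, ξ = ∂/∂φ − q ∂/∂p + (p − r·cot α) ∂/∂q, η = tan α · ∂/∂p − ∂/∂r. Then [ν, ξ] = (r/sin²α) ∂/∂q and [ν, η] = (1/cos²α) ∂/∂p; consequently, at every point with r ≠ 0 the five vectors ν, ξ, η, [ν,ξ], [ν,η] are linearly independent and span the tangent space. -/
open Real

/-- Coordinates `(p, q, r, φ, α)` on the 5-dimensional configuration space. -/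
abbrev Conf5 : Type := Fin 5 → ℝ

/-- Lie bracket of vector fields, `[X,Y](x) = DY_x(X(x)) - DX_x(Y(x))`. -/
noncomputable def lieBr (X Y : Conf5 → Conf5) (x : Conf5) : Conf5 :=
  fderiv ℝ Y x (X x) - fderiv ℝ X x (Y x)

/-- The vector field ν = ∂/∂α. -/
noncomputable def nuF : Conf5 → Conf5 := fun _ => ![0, 0, 0, 0, 1]

/-- The vector field ξ = ∂/∂φ − q ∂/∂p + (p − r cot α) ∂/∂q. -/
noncomputable def xiF : Conf5 → Conf5 := fun x =>
  ![-(x 1), x 0 - x 2 * (Real.cos (x 4) / Real.sin (x 4)), 0, 1, 0]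

/-- The vector field η = tan α ∂/∂p − ∂/∂r. -/
noncomputable def etaF : Conf5 → Conf5 := fun x =>
  ![Real.tan (x 4), 0, -1, 0, 0]

/-!
Since `ν = ∂/∂α` is a constant field, `[ν, Y]` is the `α`-derivative of `Y`, so the brackets come
from `(cot α)' = -1 / sin² α` and `(tan α)' = 1 / cos² α`. In coordinates the five vectors form a
triangular system with pivots `1, 1, -1, r / sin² α, 1 / cos² α`, all nonzero when `r ≠ 0`.
-/

lemma lieBr_const_left {v x w : Conf5} {Y : Conf5 → Conf5} (hY : DifferentiableAt ℝ Y x)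
    (h : HasDerivAt (fun t : ℝ => Y (x + t • v)) w 0) : lieBr (fun _ => v) Y x = w := by
  have hline : HasLineDerivAt ℝ Y w x v := h
  rw [lieBr, fderiv_fun_const, Pi.zero_apply, zero_apply, sub_zero,
    ← hY.lineDeriv_eq_fderiv, hline.lineDeriv]

lemma hasDerivAt_cos_div_sin {a : ℝ} (hs : sin a ≠ 0) :
    HasDerivAt (fun t => cos t / sin t) (-1 / sin a ^ 2) a := by
  refine ((hasDerivAt_cos a).div (hasDerivAt_sin a) hs).congr_deriv ?_
  rw [← sin_sq_add_cos_sq a]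
  ring

lemma differentiableAt_xiF {x : Conf5} (hs : sin (x 4) ≠ 0) : DifferentiableAt ℝ xiF x := by
  rw [differentiableAt_pi]
  intro i
  fin_cases i <;>
    simp only [xiF, Fin.isValue, Fin.reduceFinMk, Matrix.cons_val, Fin.zero_eta, Fin.mk_one,
      Matrix.cons_val_zero, Matrix.cons_val_one] <;>
    fun_prop (disch := assumption)

lemma differentiableAt_etaF {x : Conf5} (hc : cos (x 4) ≠ 0) : DifferentiableAt ℝ etaF x := by
  rw [differentiableAt_pi]
  intro i
  fin_cases i
  · exact DifferentiableAt.comp (g := tan) x (differentiableAt_tan.2 hc)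
      (differentiableAt_apply (𝕜 := ℝ) 4 x)
  all_goals simp [etaF]

lemma lieBr_nuF_xiF {x : Conf5} (hs : sin (x 4) ≠ 0) :
    lieBr nuF xiF x = ![0, x 2 / sin (x 4) ^ 2, 0, 0, 0] := by
  have hline : (fun t : ℝ => xiF (x + t • nuF x)) =
      fun t => ![-(x 1), x 0 - x 2 * (cos (x 4 + t) / sin (x 4 + t)), 0, 1, 0] := by
    funext t
    simp [xiF, nuF]
  refine lieBr_const_left (differentiableAt_xiF hs) (hline ▸ hasDerivAt_pi.2 fun i => ?_)
  have hcot : HasDerivAt (fun t => cos (x 4 + t) / sin (x 4 + t)) (-1 / sin (x 4) ^ 2) 0 := by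
    simpa using (hasDerivAt_cos_div_sin (a := x 4 + 0) (by simpa using hs)).comp_const_add (x 4) 0
  fin_cases i
  · exact hasDerivAt_const _ _
  · show HasDerivAt (fun t => x 0 - x 2 * (cos (x 4 + t) / sin (x 4 + t))) (x 2 / sin (x 4) ^ 2) 0
    exact ((hcot.const_mul (x 2)).const_sub (x 0)).congr_deriv (by ring)
  all_goals exact hasDerivAt_const _ _

lemma lieBr_nuF_etaF {x : Conf5} (hc : cos (x 4) ≠ 0) :
    lieBr nuF etaF x = ![1 / cos (x 4) ^ 2, 0, 0, 0, 0] := by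
  have hline : (fun t : ℝ => etaF (x + t • nuF x)) = fun t => ![tan (x 4 + t), 0, -1, 0, 0] := by
    funext t
    simp [etaF, nuF]
  refine lieBr_const_left (differentiableAt_etaF hc) (hline ▸ hasDerivAt_pi.2 fun i => ?_)
  fin_cases i
  · simpa using (hasDerivAt_tan (x := x 4 + 0) (by simpa using hc)).comp_const_add (x 4) 0
  all_goals exact hasDerivAt_const _ _

lemma linearIndependent_frame {x : Conf5} (hs : sin (x 4) ≠ 0) (hc : cos (x 4) ≠ 0)
    (hr : x 2 ≠ 0) :
    LinearIndependent ℝ ![nuF x, xiF x, etaF x,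
      ![0, x 2 / sin (x 4) ^ 2, 0, 0, 0], ![1 / cos (x 4) ^ 2, 0, 0, 0, 0]] := by
  rw [Fintype.linearIndependent_iff]
  intro g hg
  have hcoord (i : Fin 5) := congrFun hg i
  simp only [Finset.sum_apply, Fin.sum_univ_five, Pi.smul_apply, smul_eq_mul] at hcoord
  have hg0 : g 0 = 0 := by simpa [nuF, xiF, etaF] using hcoord 4
  have hg1 : g 1 = 0 := by simpa [nuF, xiF, etaF] using hcoord 3
  have hg2 : g 2 = 0 := by simpa [nuF, xiF, etaF] using hcoord 2
  have hg3 : g 3 = 0 := by simpa [nuF, xiF, etaF, hg1, hs, hr] using hcoord 1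
  have hg4 : g 4 = 0 := by simpa [nuF, xiF, etaF, hg1, hg2, hc] using hcoord 0
  intro i
  fin_cases i <;> assumption

theorem stmt15 (x : Conf5) (hs : Real.sin (x 4) ≠ 0) (hc : Real.cos (x 4) ≠ 0) :
    lieBr nuF xiF x = ![0, x 2 / (Real.sin (x 4)) ^ 2, 0, 0, 0] ∧
    lieBr nuF etaF x = ![1 / (Real.cos (x 4)) ^ 2, 0, 0, 0, 0] ∧
    (x 2 ≠ 0 →
      LinearIndependent ℝ ![nuF x, xiF x, etaF x, lieBr nuF xiF x, lieBr nuF etaF x] ∧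
      Submodule.span ℝ
        (Set.range ![nuF x, xiF x, etaF x, lieBr nuF xiF x, lieBr nuF etaF x]) = ⊤) := by
  refine ⟨lieBr_nuF_xiF hs, lieBr_nuF_etaF hc, fun hr => ?_⟩
  have hli := linearIndependent_frame hs hc hr
  rw [← lieBr_nuF_xiF hs, ← lieBr_nuF_etaF hc] at hli
  exact ⟨hli, hli.span_eq_top_of_card_eq_finrank (by simp)⟩
end

section
/- Let γ(t) = (t, 0, 0) for t ∈ [0,1] and suppose (x(t), y(t), z(t)) is a C¹ curve with z'(t) = y(t)²·x'(t) for all t, x(0) = 0, x(1) = 1, z(0) = z(1) = 0, and x'(t) > 0 for all t. Then y(t) = 0 and z(t) = 0 for all t ∈ [0,1]. -/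
/-!
Along the curve `z' = y² x' ≥ 0`, so `z` is monotone on `[0, 1]`; since `z 0 = z 1 = 0` it vanishes
there, hence so does `z' = y² x'`, and `x' > 0` forces `y = 0`.
-/

open Set

theorem MonotoneOn.eqOn_Icc_of_eq {f : ℝ → ℝ} {a b c : ℝ} (hf : MonotoneOn f (Icc a b))
    (ha : f a = c) (hb : f b = c) : EqOn f (fun _ => c) (Icc a b) := fun _ ht =>
  le_antisymm (hb ▸ hf ht (right_mem_Icc.2 (ht.1.trans ht.2)) ht.2)
    (ha ▸ hf (left_mem_Icc.2 (ht.1.trans ht.2)) ht ht.1)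

theorem deriv_eq_zero_of_eqOn_const {f : ℝ → ℝ} {s : Set ℝ} {c : ℝ} (hs : UniqueDiffOn ℝ s)
    (hfc : EqOn f (fun _ => c) s) {t : ℝ} (ht : t ∈ s) (hft : DifferentiableAt ℝ f t) :
    deriv f t = 0 := by
  rw [← hft.derivWithin (hs t ht), derivWithin_congr hfc (hfc ht)]
  exact congrFun (derivWithin_const s c) t

theorem stmt17_general (x y z : ℝ → ℝ)
    (hz : ContDiff ℝ 1 z)
    (hhor : ∀ t ∈ Set.Icc (0 : ℝ) 1, deriv z t = (y t) ^ 2 * deriv x t)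
    (hz0 : z 0 = 0) (hz1 : z 1 = 0)
    (hx' : ∀ t ∈ Set.Icc (0 : ℝ) 1, 0 < deriv x t) :
    ∀ t ∈ Set.Icc (0 : ℝ) 1, y t = 0 ∧ z t = 0 := by
  have hzd : Differentiable ℝ z := hz.differentiable one_ne_zero
  have hmono : MonotoneOn z (Icc 0 1) := by
    refine monotoneOn_of_deriv_nonneg (convex_Icc 0 1) hzd.continuous.continuousOn
      hzd.differentiableOn fun t ht => ?_
    have ht' : t ∈ Icc (0 : ℝ) 1 := interior_subset ht
    rw [hhor t ht']
    exact mul_nonneg (sq_nonneg _) (hx' t ht').le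
  have hzero : EqOn z (fun _ => 0) (Icc 0 1) := hmono.eqOn_Icc_of_eq hz0 hz1
  intro t ht
  have hdz : (y t) ^ 2 * deriv x t = 0 :=
    hhor t ht ▸ deriv_eq_zero_of_eqOn_const (uniqueDiffOn_Icc zero_lt_one) hzero ht (hzd t)
  exact ⟨pow_eq_zero_iff two_ne_zero |>.1 ((mul_eq_zero.1 hdz).resolve_right (hx' t ht).ne'),
    hzero ht⟩

theorem stmt17 (x y z : ℝ → ℝ)
    (hx : ContDiff ℝ 1 x) (hy : ContDiff ℝ 1 y) (hz : ContDiff ℝ 1 z)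
    (hhor : ∀ t ∈ Set.Icc (0 : ℝ) 1, deriv z t = (y t) ^ 2 * deriv x t)
    (hx0 : x 0 = 0) (hx1 : x 1 = 1) (hz0 : z 0 = 0) (hz1 : z 1 = 0)
    (hx' : ∀ t ∈ Set.Icc (0 : ℝ) 1, 0 < deriv x t) :
    ∀ t ∈ Set.Icc (0 : ℝ) 1, y t = 0 ∧ z t = 0 :=
  stmt17_general x y z hz hhor hz0 hz1 hx'
end
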